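/- Let L be a linear subspace of R^n with dim(L) < n and let W ⊆ R^n be a Borel set invariant under addition of elements of L, i.e., W + v = W for every v ∈ L. Then for every a ∈ R^n, every σ ∈ (0, ∞), and every symmetric positive definite n×n matrix Σ, one has P_{a, σ²Σ}(W) = P_{a, σ²(Π_{L⊥} Σ Π_{L⊥} + Π_L)}(W), where Π_L and Π_{L⊥} are the orthogonal projections onto L and L⊥ respectively. -/

import Mathlib

open Matrix MeasureTheory

/-- The Gaussian measure `N(μ, S)` on `ℝⁿ`, defined through its Lebesgue density. -/
noncomputable def gaussianMeasure {n : ℕ} (μ : Fin n → ℝ) (S : Matrix (Fin n) (Fin n) ℝ) :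
    Measure (Fin n → ℝ) :=
  volume.withDensity fun y =>
    ENNReal.ofReal (Real.sqrt (((2 * Real.pi) ^ n * S.det)⁻¹) *
      Real.exp (-(1 / 2) * ((y - μ) ⬝ᵥ S⁻¹.mulVec (y - μ))))

/-- `P` is the orthogonal projection (matrix) onto the subspace `L` of `ℝⁿ`. -/
def IsProjOnto {n : ℕ} (P : Matrix (Fin n) (Fin n) ℝ) (L : Submodule ℝ (Fin n → ℝ)) : Prop :=
  Pᵀ = P ∧ P * P = P ∧ (∀ x, P.mulVec x ∈ L) ∧ ∀ x ∈ L, P.mulVec x = x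

/-!
Since `W` is invariant under translations by `L`, whether a point lies in `W` depends only on its
`(1 - P)`-component. It therefore suffices to find an invertible `M` with `(1 - P) M = 1 - P` and
`M S Mᵀ = (1 - P) S (1 - P) + P`: the affine map `x ↦ M (x - a) + a` then preserves `W` and pushes
`N(a, σ²S)` forward to `N(a, σ²((1 - P) S (1 - P) + P))`. With `Q = 1 - P`, `Λ = S⁻¹` and `T` the
inverse square root of `H = P Λ P + Q`, which commutes with `P`, one can take `M = Q + T P Λ`.
-/

open scoped ENNReal

theorem IsIdempotentElem.commute_mul_mul_add_one_sub {R : Type*} [Ring R] {p : R}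
    (hp : IsIdempotentElem p) (a : R) : Commute (p * a * p + (1 - p)) p :=
  calc (p * a * p + (1 - p)) * p = p * a * (p * p) + (1 - p) * p := by noncomm_ring
    _ = p * p * a * p + p * (1 - p) := by
        rw [hp.eq, hp.one_sub_mul_self, hp.mul_one_sub_self]
    _ = p * (p * a * p + (1 - p)) := by noncomm_ring

namespace Matrix

open scoped MatrixOrder

lemma star_dotProduct_conjTranspose_mul_mul_mulVec {m ι R : Type*} [Fintype m] [Fintype ι]
    [CommSemiring R] [StarRing R] (A : Matrix m m R) (B : Matrix m ι R) (x : ι → R) :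
    star x ⬝ᵥ ((Bᴴ * A * B) *ᵥ x) = star (B *ᵥ x) ⬝ᵥ (A *ᵥ (B *ᵥ x)) := by
  rw [← mulVec_mulVec, ← mulVec_mulVec, dotProduct_mulVec, star_mulVec]

variable {ι : Type*} [Fintype ι] [DecidableEq ι]

theorem PosDef.one_sub_mul_mul_one_sub_add {P S : Matrix ι ι ℝ} (hS : S.PosDef)
    (hP : IsStarProjection P) : ((1 - P) * S * (1 - P) + P).PosDef := by
  have hconj : (1 - P) * S * (1 - P) + P = (1 - P)ᴴ * S * (1 - P) + Pᴴ * 1 * P := by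
    rw [← star_eq_conjTranspose, ← star_eq_conjTranspose, hP.one_sub.isSelfAdjoint.star_eq,
      hP.isSelfAdjoint.star_eq, Matrix.mul_one, hP.isIdempotentElem.eq]
  refine .of_dotProduct_mulVec_pos ?_ fun x hx => ?_
  · rw [hconj]
    exact (isHermitian_conjTranspose_mul_mul _ hS.1).add
      (isHermitian_conjTranspose_mul_mul _ isHermitian_one)
  rw [hconj, add_mulVec, dotProduct_add, star_dotProduct_conjTranspose_mul_mul_mulVec,
    star_dotProduct_conjTranspose_mul_mul_mulVec, one_mulVec]
  by_cases hQx : (1 - P) *ᵥ x = 0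
  · have hPx : P *ᵥ x = x := by rwa [sub_mulVec, one_mulVec, sub_eq_zero, eq_comm] at hQx
    rw [hQx, hPx, mulVec_zero, dotProduct_zero, zero_add]
    exact dotProduct_star_self_pos_iff.mpr hx
  · exact add_pos_of_pos_of_nonneg (hS.dotProduct_mulVec_pos hQx) (dotProduct_star_self_nonneg _)

lemma commute_sqrt_inv_left {H X : Matrix ι ι ℝ} (hH : IsUnit H) (hHX : Commute H X) :
    Commute (CFC.sqrt H⁻¹) X := by
  have hinv : Commute H⁻¹ X := by
    simpa [coe_units_inv] using (show Commute (hH.unit : Matrix ι ι ℝ) X from hHX).units_inv_left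
  rw [CFC.sqrt_eq_cfc]
  exact hinv.cfc_nnreal _

lemma PosDef.sqrt_inv_mul_self_mul_sqrt_inv {H : Matrix ι ι ℝ} (hH : H.PosDef) :
    CFC.sqrt H⁻¹ * H * CFC.sqrt H⁻¹ = 1 := by
  rw [Matrix.mul_assoc, ← (commute_sqrt_inv_left hH.isUnit (.refl H)).eq, ← Matrix.mul_assoc,
    CFC.sqrt_mul_sqrt_self _ hH.inv.posSemidef.nonneg,
    nonsing_inv_mul H ((isUnit_iff_isUnit_det H).mp hH.isUnit)]

lemma PosDef.sqrt_inv_mul_mul_sqrt_inv_of_mul_eq_self {H X : Matrix ι ι ℝ} (hH : H.PosDef)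
    (hHX : Commute H X) (hXH : X * H = X) : CFC.sqrt H⁻¹ * X * CFC.sqrt H⁻¹ = X := by
  rw [(commute_sqrt_inv_left hH.isUnit hHX).eq, Matrix.mul_assoc,
    CFC.sqrt_mul_sqrt_self _ hH.inv.posSemidef.nonneg]
  conv_lhs => rw [← hXH]
  rw [Matrix.mul_assoc, mul_nonsing_inv H ((isUnit_iff_isUnit_det H).mp hH.isUnit),
    Matrix.mul_one]

theorem exists_one_sub_mul_eq_and_mul_mul_transpose_eq {P S : Matrix ι ι ℝ}
    (hP : IsStarProjection P) (hS : S.PosDef) :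
    ∃ M : Matrix ι ι ℝ, (1 - P) * M = 1 - P ∧ M * S * Mᵀ = (1 - P) * S * (1 - P) + P := by
  have hH : (P * S⁻¹ * P + (1 - P)).PosDef := by
    simpa only [sub_sub_cancel] using hS.inv.one_sub_mul_mul_one_sub_add hP.one_sub
  have hPt : Pᵀ = P := (isHermitian_iff_isSymm.mp hP.isSelfAdjoint).eq
  have hQt : (1 - P)ᵀ = 1 - P := (isHermitian_iff_isSymm.mp hP.one_sub.isSelfAdjoint).eq
  have hSinvt : S⁻¹ᵀ = S⁻¹ := by
    rw [transpose_nonsing_inv, (isHermitian_iff_isSymm.mp hS.isHermitian).eq]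
  have hSunit : IsUnit S.det := (isUnit_iff_isUnit_det S).mp hS.isUnit
  have hQP : (1 - P) * P = 0 := hP.one_sub_mul_self
  have hPQ : P * (1 - P) = 0 := hP.mul_one_sub_self
  have hQQ : (1 - P) * (1 - P) = 1 - P := hP.one_sub.isIdempotentElem.eq
  have hHP := hP.isIdempotentElem.commute_mul_mul_add_one_sub S⁻¹
  generalize hQdef : 1 - P = Q at *
  set H := P * S⁻¹ * P + Q with hHdef
  have hQH : Q * H = Q := by
    simp only [hHdef, Matrix.mul_add, ← Matrix.mul_assoc, hQP, Matrix.zero_mul, zero_add, hQQ]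
  set T := CFC.sqrt H⁻¹
  have hTt : Tᵀ = T :=
    (isHermitian_iff_isSymm.mp (CFC.sqrt_nonneg H⁻¹).posSemidef.isHermitian).eq
  have hTQ : Commute T Q :=
    hQdef ▸ (Commute.one_right T).sub_right (commute_sqrt_inv_left hH.isUnit hHP)
  have hHQ : Commute H Q := hQdef ▸ (Commute.one_right H).sub_right hHP
  refine ⟨Q + T * P * S⁻¹, ?_, ?_⟩
  · rw [Matrix.mul_add, hQQ, ← Matrix.mul_assoc, ← Matrix.mul_assoc, ← hTQ.eq,
      Matrix.mul_assoc T, hQP, Matrix.mul_zero, Matrix.zero_mul, add_zero]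
  calc (Q + T * P * S⁻¹) * S * (Q + T * P * S⁻¹)ᵀ
      = Q * S * Q + Q * (S * S⁻¹) * P * T + T * P * (S⁻¹ * S) * Q
        + T * (P * (S⁻¹ * S) * S⁻¹ * P) * T := by
        rw [transpose_add, transpose_mul, transpose_mul, hQt, hTt, hPt, hSinvt]
        noncomm_ring
    _ = Q * S * Q + T * (H - Q) * T := by
        rw [mul_nonsing_inv S hSunit, nonsing_inv_mul S hSunit, Matrix.mul_one, Matrix.mul_one,
          Matrix.mul_one, hQP, Matrix.mul_assoc T P Q, hPQ, hHdef, add_sub_cancel_right,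
          Matrix.zero_mul, Matrix.mul_zero, add_zero, add_zero]
    _ = Q * S * Q + P := by
        have hTQT : T * Q * T = Q :=
          hH.sqrt_inv_mul_mul_sqrt_inv_of_mul_eq_self hHQ hQH
        rw [Matrix.mul_sub, Matrix.sub_mul, hH.sqrt_inv_mul_self_mul_sqrt_inv, hTQT, ← hQdef,
          sub_sub_cancel]

end Matrix

theorem MeasureTheory.Measure.map_withDensity_comp {α β : Type*} [MeasurableSpace α]
    [MeasurableSpace β] {μ : Measure α} {ν : Measure β} {T : α → β} {c : ℝ≥0∞} {g : β → ℝ≥0∞}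
    (hT : Measurable T) (hμ : μ.map T = c • ν) (hg : Measurable g) :
    (μ.withDensity (g ∘ T)).map T = c • ν.withDensity g := by
  ext s hs
  rw [map_apply hT hs, withDensity_apply _ (hT hs), Measure.smul_apply, withDensity_apply _ hs,
    ← lintegral_indicator (hT hs), ← lintegral_indicator hs, ← lintegral_smul_measure, ← hμ,
    lintegral_map (hg.indicator hs) hT]
  rfl

section Gaussian

variable {n : ℕ}

noncomputable def gaussianDensity (a : Fin n → ℝ) (S : Matrix (Fin n) (Fin n) ℝ)
    (y : Fin n → ℝ) : ℝ :=
  Real.sqrt (((2 * Real.pi) ^ n * S.det)⁻¹) * Real.exp (-(1 / 2) * ((y - a) ⬝ᵥ S⁻¹ *ᵥ (y - a)))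

lemma gaussianMeasure_eq_withDensity (a : Fin n → ℝ) (S : Matrix (Fin n) (Fin n) ℝ) :
    gaussianMeasure a S = volume.withDensity fun y => ENNReal.ofReal (gaussianDensity a S y) :=
  rfl

@[fun_prop]
lemma continuous_gaussianDensity (a : Fin n → ℝ) (S : Matrix (Fin n) (Fin n) ℝ) :
    Continuous (gaussianDensity a S) := by
  unfold gaussianDensity
  fun_prop

lemma abs_det_mul_gaussianDensity_affine {M : Matrix (Fin n) (Fin n) ℝ} (hM : M.det ≠ 0)
    (a : Fin n → ℝ) (S : Matrix (Fin n) (Fin n) ℝ) (x : Fin n → ℝ) :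
    |M.det| * gaussianDensity a (M * S * Mᵀ) (M *ᵥ (x - a) + a) = gaussianDensity a S x := by
  have hquad : Mᵀ * (M * S * Mᵀ)⁻¹ * M = S⁻¹ := by
    rw [Matrix.mul_inv_rev, Matrix.mul_inv_rev, mul_nonsing_inv_cancel_left _ _
      (by rwa [det_transpose, isUnit_iff_ne_zero]), nonsing_inv_mul_cancel_right _ _ hM.isUnit]
  have hconst : |M.det| * √(((2 * Real.pi) ^ n * (M * S * Mᵀ).det)⁻¹) =
      √(((2 * Real.pi) ^ n * S.det)⁻¹) := by
    rw [det_mul, det_mul, det_transpose, show (2 * Real.pi) ^ n * (M.det * S.det * M.det) =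
        M.det ^ 2 * ((2 * Real.pi) ^ n * S.det) by ring,
      mul_inv, Real.sqrt_mul (inv_nonneg.mpr (sq_nonneg _)), Real.sqrt_inv, Real.sqrt_sq_eq_abs,
      ← mul_assoc, mul_inv_cancel₀ (abs_ne_zero.mpr hM), one_mul]
  rw [gaussianDensity, gaussianDensity, ← mul_assoc, hconst, add_sub_cancel_right, ← hquad,
    ← mulVec_mulVec, ← mulVec_mulVec, dotProduct_mulVec (x - a) Mᵀ, vecMul_transpose]

lemma map_volume_affine {M : Matrix (Fin n) (Fin n) ℝ} (hM : M.det ≠ 0) (a : Fin n → ℝ) :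
    volume.map (fun x => M *ᵥ (x - a) + a) = ENNReal.ofReal |M.det⁻¹| • volume := by
  have hcomp : (fun x => M *ᵥ (x - a) + a) = (· + a) ∘ toLin' M ∘ (· - a) := by
    ext x; simp [toLin'_apply]
  rw [hcomp, ← Measure.map_map (by fun_prop) (by fun_prop),
    ← Measure.map_map (by fun_prop) (by fun_prop), map_sub_right_eq_self,
    Real.map_matrix_volume_pi_eq_smul_volume_pi hM, Measure.map_smul, map_add_right_eq_self]

theorem map_gaussianMeasure_affine {M : Matrix (Fin n) (Fin n) ℝ} (hM : M.det ≠ 0)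
    (a : Fin n → ℝ) (S : Matrix (Fin n) (Fin n) ℝ) :
    (gaussianMeasure a S).map (fun x => M *ᵥ (x - a) + a) = gaussianMeasure a (M * S * Mᵀ) := by
  have hdens : gaussianMeasure a S = volume.withDensity
      ((ENNReal.ofReal |M.det| • fun y => ENNReal.ofReal (gaussianDensity a (M * S * Mᵀ) y)) ∘
        fun x => M *ᵥ (x - a) + a) := by
    rw [gaussianMeasure_eq_withDensity]
    congr 1
    funext x
    rw [Function.comp_apply, Pi.smul_apply, smul_eq_mul, ← ENNReal.ofReal_mul (abs_nonneg _),
      abs_det_mul_gaussianDensity_affine hM]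
  rw [hdens, Measure.map_withDensity_comp (by fun_prop) (map_volume_affine hM a) (by fun_prop),
    withDensity_smul' _ _ ENNReal.ofReal_ne_top, smul_smul, ← ENNReal.ofReal_mul (abs_nonneg _),
    ← abs_mul, inv_mul_cancel₀ hM, abs_one, ENNReal.ofReal_one, one_smul,
    gaussianMeasure_eq_withDensity]

lemma preimage_affine_eq_self {L : Submodule ℝ (Fin n → ℝ)} {P M : Matrix (Fin n) (Fin n) ℝ}
    (hPL : ∀ x, P *ᵥ x ∈ L) {W : Set (Fin n → ℝ)} (hinv : ∀ v ∈ L, ∀ y, (y + v ∈ W ↔ y ∈ W))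
    (hQM : (1 - P) * M = 1 - P) (a : Fin n → ℝ) :
    (fun x => M *ᵥ (x - a) + a) ⁻¹' W = W := by
  ext x
  have hQv : (1 - P) *ᵥ ((M - 1) *ᵥ (x - a)) = 0 := by
    rw [mulVec_mulVec, Matrix.mul_sub, hQM, Matrix.mul_one, sub_self, zero_mulVec]
  have hv : (M - 1) *ᵥ (x - a) ∈ L := by
    rw [sub_mulVec, one_mulVec, sub_eq_zero] at hQv
    exact hQv ▸ hPL _
  have hx : M *ᵥ (x - a) + a = x + (M - 1) *ᵥ (x - a) := by
    rw [sub_mulVec, one_mulVec]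
    abel
  rw [Set.mem_preimage, hx]
  exact hinv _ hv x

end Gaussian

theorem stmt_11_general {n : ℕ} (L : Submodule ℝ (Fin n → ℝ))
    (P : Matrix (Fin n) (Fin n) ℝ) (hP : IsProjOnto P L)
    (W : Set (Fin n → ℝ)) (hW : MeasurableSet W)
    (hinv : ∀ v ∈ L, ∀ y : Fin n → ℝ, (y + v ∈ W ↔ y ∈ W)) :
    ∀ (a : Fin n → ℝ) (σ : ℝ), 0 < σ →
      ∀ (S : Matrix (Fin n) (Fin n) ℝ), S.PosDef →
        gaussianMeasure a (σ ^ 2 • S) W =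
          gaussianMeasure a
            (σ ^ 2 • (((1 : Matrix (Fin n) (Fin n) ℝ) - P) * S *
              ((1 : Matrix (Fin n) (Fin n) ℝ) - P) + P)) W := by
  intro a σ _ S hS
  have hPstar : IsStarProjection P :=
    isStarProjection_iff'.mpr ⟨hP.2.1, (isHermitian_iff_isSymm.mpr hP.1 :)⟩
  obtain ⟨M, hQM, hMSM⟩ := exists_one_sub_mul_eq_and_mul_mul_transpose_eq hPstar hS
  have hM : M.det ≠ 0 := by
    have hpos := (hS.one_sub_mul_mul_one_sub_add hPstar).det_pos
    rw [← hMSM, det_mul, det_mul, det_transpose] at hpos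
    rintro h
    simp [h] at hpos
  calc gaussianMeasure a (σ ^ 2 • S) W
      = (gaussianMeasure a (σ ^ 2 • S)).map (fun x => M *ᵥ (x - a) + a) W := by
        rw [Measure.map_apply (by fun_prop) hW, preimage_affine_eq_self hP.2.2.1 hinv hQM a]
    _ = _ := by rw [map_gaussianMeasure_affine hM, Matrix.mul_smul, Matrix.smul_mul, hMSM]

theorem stmt_11 {n : ℕ} (L : Submodule ℝ (Fin n → ℝ)) (hL : Module.finrank ℝ L < n)
    (P : Matrix (Fin n) (Fin n) ℝ) (hP : IsProjOnto P L)
    (W : Set (Fin n → ℝ)) (hW : MeasurableSet W)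
    (hinv : ∀ v ∈ L, ∀ y : Fin n → ℝ, (y + v ∈ W ↔ y ∈ W)) :
    ∀ (a : Fin n → ℝ) (σ : ℝ), 0 < σ →
      ∀ (S : Matrix (Fin n) (Fin n) ℝ), S.PosDef →
        gaussianMeasure a (σ ^ 2 • S) W =
          gaussianMeasure a
            (σ ^ 2 • (((1 : Matrix (Fin n) (Fin n) ℝ) - P) * S *
              ((1 : Matrix (Fin n) (Fin n) ℝ) - P) + P)) W :=
  stmt_11_general L P hP W hW hinv
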